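/- Let ψ : S × [m] → ℝ^{d_a} with ‖ψ(s,a)‖ ≤ K, and define softmax policies μ_ϑ as above for ϑ in the unit ball of ℝ^{d_a}. Then there exists a constant L_K = mKe^K such that for all ϑ, ϑ' in the unit ball, max_{s∈S} H(μ_ϑ(·|s), μ_{ϑ'}(·|s)) ≤ L_K ‖ϑ − ϑ'‖, where H is the Hellinger distance. -/
import Mathlib


open BigOperators

/-- Softmax policy generated by parameter `ϑ` and feature map `ψ`. -/
noncomputable def softmaxPolicy {S : Type*} {m da : ℕ}
    (ψ : S → Fin (m + 1) → Fin da → ℝ) (ϑ : Fin da → ℝ) (s : S) (a : Fin (m + 1)) : ℝ :=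
  Real.exp (∑ i, ϑ i * ψ s a i) / ∑ a', Real.exp (∑ i, ϑ i * ψ s a' i)

private lemma exp_sub_exp_le' {u v : ℝ} (h : v ≤ u) :
    Real.exp u - Real.exp v ≤ Real.exp u * (u - v) := by
  have h1 : (v - u) + 1 ≤ Real.exp (v - u) := Real.add_one_le_exp _
  have h2 : Real.exp (v - u) = Real.exp v / Real.exp u := by
    rw [Real.exp_sub]
  have hpos := Real.exp_pos u
  rw [h2] at h1
  have h3 : Real.exp u * ((v - u) + 1) ≤ Real.exp v := by
    calc Real.exp u * ((v - u) + 1) ≤ Real.exp u * (Real.exp v / Real.exp u) :=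
          mul_le_mul_of_nonneg_left h1 hpos.le
      _ = Real.exp v := by field_simp
  nlinarith

private lemma abs_exp_sub_exp (u v : ℝ) :
    |Real.exp u - Real.exp v| ≤ (Real.exp u + Real.exp v) * |u - v| := by
  rcases le_total v u with h | h
  · rw [abs_of_nonneg (sub_nonneg.2 (Real.exp_le_exp.2 h)), abs_of_nonneg (sub_nonneg.2 h)]
    nlinarith [exp_sub_exp_le' h, Real.exp_pos u, Real.exp_pos v]
  · rw [abs_of_nonpos (sub_nonpos.2 (Real.exp_le_exp.2 h)), abs_of_nonpos (sub_nonpos.2 h)]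
    nlinarith [exp_sub_exp_le' h, Real.exp_pos u, Real.exp_pos v]

private lemma hell_ptwise {p q c : ℝ} (hp : 0 < p) (hq : 0 < q) (hc : 0 ≤ c)
    (h : |p - q| ≤ c * (p + q)) :
    (Real.sqrt p - Real.sqrt q) ^ 2 ≤ c ^ 2 * (p + q) := by
  have hsp : Real.sqrt p ^ 2 = p := Real.sq_sqrt hp.le
  have hsq : Real.sqrt q ^ 2 = q := Real.sq_sqrt hq.le
  have hspn : 0 ≤ Real.sqrt p := Real.sqrt_nonneg p
  have hsqn : 0 ≤ Real.sqrt q := Real.sqrt_nonneg q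
  have hsq2 : (p - q) ^ 2 ≤ (c * (p + q)) ^ 2 := by
    have := abs_nonneg (p - q)
    nlinarith [sq_abs (p - q)]
  have key : (Real.sqrt p - Real.sqrt q) ^ 2 * (p + q) ≤ c ^ 2 * (p + q) ^ 2 := by
    nlinarith [mul_nonneg hspn hsqn, sq_nonneg (Real.sqrt p - Real.sqrt q),
      sq_nonneg (Real.sqrt p + Real.sqrt q)]
  have hppq : 0 < p + q := by linarith
  nlinarith

/-- The parametrization `ϑ ↦ μ_ϑ(·|s)` is Lipschitz in the Hellinger distance with
constant `L_K = m K e^K`, uniformly over states. -/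
theorem softmax_hellinger_lipschitz (S : Type*) (m da : ℕ)
    (ψ : S → Fin (m + 1) → Fin da → ℝ) (K : ℝ)
    (hψ : ∀ s a, Real.sqrt (∑ i, ψ s a i ^ 2) ≤ K)
    (ϑ ϑ' : Fin da → ℝ)
    (hϑ : Real.sqrt (∑ i, ϑ i ^ 2) ≤ 1) (hϑ' : Real.sqrt (∑ i, ϑ' i ^ 2) ≤ 1)
    (s : S) :
    Real.sqrt ((1 / 2) *
        ∑ a, (Real.sqrt (softmaxPolicy ψ ϑ s a) - Real.sqrt (softmaxPolicy ψ ϑ' s a)) ^ 2) ≤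
      (m + 1) * K * Real.exp K * Real.sqrt (∑ i, (ϑ i - ϑ' i) ^ 2) := by
  have hK : 0 ≤ K := le_trans (Real.sqrt_nonneg _) (hψ s 0)
  set δ : ℝ := Real.sqrt (∑ i, (ϑ i - ϑ' i) ^ 2) with hδdef
  have hδ : 0 ≤ δ := Real.sqrt_nonneg _
  set x : Fin (m + 1) → ℝ := fun a => ∑ i, ϑ i * ψ s a i with hxdef
  set y : Fin (m + 1) → ℝ := fun a => ∑ i, ϑ' i * ψ s a i with hydef
  have hCS : ∀ a, |x a - y a| ≤ K * δ := by
    intro a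
    have h1 : x a - y a = ∑ i, (ϑ i - ϑ' i) * ψ s a i := by
      simp only [hxdef, hydef, ← Finset.sum_sub_distrib]
      exact Finset.sum_congr rfl fun i _ => (sub_mul _ _ _).symm
    rw [h1]
    have h2 := Finset.sum_mul_sq_le_sq_mul_sq Finset.univ (fun i => ϑ i - ϑ' i)
      (fun i => ψ s a i)
    calc |∑ i, (ϑ i - ϑ' i) * ψ s a i|
        = Real.sqrt ((∑ i, (ϑ i - ϑ' i) * ψ s a i) ^ 2) := (Real.sqrt_sq_eq_abs _).symm
      _ ≤ Real.sqrt ((∑ i, (ϑ i - ϑ' i) ^ 2) * ∑ i, ψ s a i ^ 2) := Real.sqrt_le_sqrt h2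
      _ = δ * Real.sqrt (∑ i, ψ s a i ^ 2) := Real.sqrt_mul (by positivity) _
      _ ≤ δ * K := mul_le_mul_of_nonneg_left (hψ s a) hδ
      _ = K * δ := mul_comm _ _
  set Dx : ℝ := ∑ a, Real.exp (x a) with hDxdef
  set Dy : ℝ := ∑ a, Real.exp (y a) with hDydef
  have hDx : 0 < Dx := Finset.sum_pos (fun a _ => Real.exp_pos _) Finset.univ_nonempty
  have hDy : 0 < Dy := Finset.sum_pos (fun a _ => Real.exp_pos _) Finset.univ_nonempty
  have hpdef : ∀ a, softmaxPolicy ψ ϑ s a = Real.exp (x a) / Dx := fun a => rfl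
  have hqdef : ∀ a, softmaxPolicy ψ ϑ' s a = Real.exp (y a) / Dy := fun a => rfl
  have hnum : ∀ a, |Real.exp (x a) * Dy - Real.exp (y a) * Dx| ≤
      (2 * (K * δ)) * (Real.exp (x a) * Dy + Real.exp (y a) * Dx) := by
    intro a
    have e1 : Real.exp (x a) * Dy - Real.exp (y a) * Dx =
        ∑ b, (Real.exp (x a + y b) - Real.exp (y a + x b)) := by
      simp [hDxdef, hDydef, Finset.mul_sum, Real.exp_add, Finset.sum_sub_distrib]
    rw [e1]
    calc |∑ b, (Real.exp (x a + y b) - Real.exp (y a + x b))|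
        ≤ ∑ b, |Real.exp (x a + y b) - Real.exp (y a + x b)| :=
          Finset.abs_sum_le_sum_abs _ _
      _ ≤ ∑ b, (Real.exp (x a + y b) + Real.exp (y a + x b)) * (2 * (K * δ)) := by
          refine Finset.sum_le_sum fun b _ => ?_
          refine (abs_exp_sub_exp _ _).trans ?_
          refine mul_le_mul_of_nonneg_left ?_ (by positivity)
          have h5 : (x a + y b) - (y a + x b) = (x a - y a) + -(x b - y b) := by ring
          rw [h5]
          refine (abs_add_le _ _).trans ?_
          rw [abs_neg]
          linarith [hCS a, hCS b]
      _ = (2 * (K * δ)) * (Real.exp (x a) * Dy + Real.exp (y a) * Dx) := by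
          rw [← Finset.sum_mul, Finset.sum_add_distrib]
          simp only [Real.exp_add, ← Finset.mul_sum]
          ring
  have hppos : ∀ a, 0 < softmaxPolicy ψ ϑ s a := fun a => by
    rw [hpdef]; exact div_pos (Real.exp_pos _) hDx
  have hqpos : ∀ a, 0 < softmaxPolicy ψ ϑ' s a := fun a => by
    rw [hqdef]; exact div_pos (Real.exp_pos _) hDy
  have hpq : ∀ a, |softmaxPolicy ψ ϑ s a - softmaxPolicy ψ ϑ' s a| ≤
      (2 * (K * δ)) * (softmaxPolicy ψ ϑ s a + softmaxPolicy ψ ϑ' s a) := by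
    intro a
    rw [hpdef, hqdef]
    have e2 : Real.exp (x a) / Dx - Real.exp (y a) / Dy =
        (Real.exp (x a) * Dy - Real.exp (y a) * Dx) / (Dx * Dy) := by
      field_simp
    have e3 : Real.exp (x a) / Dx + Real.exp (y a) / Dy =
        (Real.exp (x a) * Dy + Real.exp (y a) * Dx) / (Dx * Dy) := by
      field_simp
    rw [e2, e3, abs_div, abs_of_pos (mul_pos hDx hDy), ← mul_div_assoc]
    exact (div_le_div_iff_of_pos_right (mul_pos hDx hDy)).2 (hnum a)
  have hsum1 : ∑ a, softmaxPolicy ψ ϑ s a = 1 := by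
    simp only [hpdef, ← Finset.sum_div]
    rw [div_self hDx.ne']
  have hsum2 : ∑ a, softmaxPolicy ψ ϑ' s a = 1 := by
    simp only [hqdef, ← Finset.sum_div]
    rw [div_self hDy.ne']
  have hsum : ∑ a, (Real.sqrt (softmaxPolicy ψ ϑ s a) - Real.sqrt (softmaxPolicy ψ ϑ' s a)) ^ 2
      ≤ (2 * (K * δ)) ^ 2 * 2 := by
    calc ∑ a, (Real.sqrt (softmaxPolicy ψ ϑ s a) - Real.sqrt (softmaxPolicy ψ ϑ' s a)) ^ 2
        ≤ ∑ a, (2 * (K * δ)) ^ 2 * (softmaxPolicy ψ ϑ s a + softmaxPolicy ψ ϑ' s a) :=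
          Finset.sum_le_sum fun a _ =>
            hell_ptwise (hppos a) (hqpos a) (by positivity) (hpq a)
      _ = (2 * (K * δ)) ^ 2 * 2 := by
          rw [← Finset.mul_sum, Finset.sum_add_distrib, hsum1, hsum2]; norm_num
  have hH : Real.sqrt ((1 / 2) *
      ∑ a, (Real.sqrt (softmaxPolicy ψ ϑ s a) - Real.sqrt (softmaxPolicy ψ ϑ' s a)) ^ 2)
      ≤ 2 * (K * δ) := by
    have h6 : (1 / 2 : ℝ) *
        ∑ a, (Real.sqrt (softmaxPolicy ψ ϑ s a) - Real.sqrt (softmaxPolicy ψ ϑ' s a)) ^ 2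
        ≤ (2 * (K * δ)) ^ 2 := by linarith
    calc Real.sqrt ((1 / 2) *
          ∑ a, (Real.sqrt (softmaxPolicy ψ ϑ s a) - Real.sqrt (softmaxPolicy ψ ϑ' s a)) ^ 2)
        ≤ Real.sqrt ((2 * (K * δ)) ^ 2) := Real.sqrt_le_sqrt h6
      _ = 2 * (K * δ) := Real.sqrt_sq (by positivity)
  rcases Nat.eq_zero_or_pos m with hm | hm
  · subst hm
    have hone : ∀ (θ : Fin da → ℝ) (a : Fin 1), softmaxPolicy ψ θ s a = 1 := by
      intro θ a
      have ha : a = 0 := Subsingleton.elim a 0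
      subst ha
      simp [softmaxPolicy, Fin.sum_univ_one, div_self (Real.exp_pos _).ne']
    have hzero : Real.sqrt ((1 / 2) *
        ∑ a, (Real.sqrt (softmaxPolicy ψ ϑ s a) - Real.sqrt (softmaxPolicy ψ ϑ' s a)) ^ 2)
        = 0 := by
      simp [hone]
    rw [hzero]
    have : (0:ℝ) ≤ ((0:ℕ) + 1) * K * Real.exp K * δ := by positivity
    exact this
  · refine hH.trans ?_
    have h2 : (2 : ℝ) ≤ (m : ℝ) + 1 := by
      have : (1 : ℝ) ≤ (m : ℝ) := by exact_mod_cast hm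
      linarith
    have hexp : (1 : ℝ) ≤ Real.exp K := Real.one_le_exp hK
    have hKδ : 0 ≤ K * δ := mul_nonneg hK hδ
    calc 2 * (K * δ) = 2 * (K * δ) * 1 := by ring
      _ ≤ ((m : ℝ) + 1) * (K * δ) * Real.exp K :=
          mul_le_mul (mul_le_mul_of_nonneg_right h2 hKδ) hexp zero_le_one
            (mul_nonneg (by linarith) hKδ)
      _ = ((m : ℝ) + 1) * K * Real.exp K * δ := by ring
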